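/- arXiv:2002.02188 — 5 statements merged into one kernel-verified Lean document; each statement's English description precedes it below -/
import Mathlib

section
/- For every real number x > -1/2, one has 1/(24(x+1)^2) < H_x - γ - log(x + 1/2) < 1/(24(x+1/2)^2), where H_x = Ψ(x+1) + γ is the analytic continuation of the harmonic numbers via the digamma function Ψ and γ is the Euler–Mascheroni constant. -/
open Real Filter MeasureTheory

/-- The digamma function: the logarithmic derivative of the Gamma function. -/
noncomputable def digamma (x : ℝ) : ℝ := deriv (fun y => Real.log (Real.Gamma y)) x

/-- The harmonic number function extended to real arguments: `H_x = Ψ(x+1) + γ`. -/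
noncomputable def Hreal (x : ℝ) : ℝ := digamma (x + 1) + Real.eulerMascheroniConstant

/-!
Put `f x = ψ(x + 1) - log (x + 1/2)`. The recurrence `ψ(y + 1) = ψ(y) + 1/y` gives
`f x - f (x + 1) = E (x + 1)`, where `E s = log (s + 1/2) - log (s - 1/2) - 1/s` is the error of
the midpoint rule for `∫ du/u` over `[s - 1/2, s + 1/2]`, and convexity of `log Γ` squeezes
`ψ(x + 1)` between `log x` and `log (x + 1)`, so `f x → 0`. Both bounds on `f` therefore follow by
telescoping from bounds of the same shape on `E`,
`1/(24 s²) - 1/(24 (s + 1)²) < E s < 1/(24 (s - 1/2)²) - 1/(24 (s + 1/2)²)`,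
and these hold because the difference of the two sides tends to `0` with negative derivative.
-/

open Set Topology

lemma pos_of_forall_add_one_lt_of_tendsto_zero {D : ℝ → ℝ} {a x : ℝ}
    (hstep : ∀ y, a < y → D (y + 1) < D y) (hlim : Tendsto D atTop (𝓝 0)) (hx : a < x) :
    0 < D x := by
  have hanti : Antitone fun n : ℕ => D (x + n) := antitone_nat_of_succ_le fun n => by
    simpa [add_assoc] using (hstep (x + n) (by linarith [n.cast_nonneg (α := ℝ)])).le
  have hlim' : Tendsto (fun n : ℕ => D (x + n)) atTop (𝓝 0) :=
    hlim.comp <| tendsto_atTop_add_const_left _ x tendsto_natCast_atTop_atTop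
  have h1 : 0 ≤ D (x + 1) := by simpa using hanti.le_of_tendsto hlim' 1
  linarith [hstep x hx]

lemma pos_of_hasDerivAt_neg_of_tendsto_zero {F F' : ℝ → ℝ} {a x : ℝ}
    (hF : ∀ y, a < y → HasDerivAt F (F' y) y) (hF' : ∀ y, a < y → F' y < 0)
    (hlim : Tendsto F atTop (𝓝 0)) (hx : a < x) : 0 < F x := by
  have hanti : StrictAntiOn F (Ioi a) :=
    strictAntiOn_of_deriv_neg (convex_Ioi a)
      (fun y hy => (hF y hy).continuousAt.continuousWithinAt)
      (fun y hy => by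
        rw [interior_Ioi] at hy
        rw [(hF y hy).deriv]
        exact hF' y hy)
  refine pos_of_forall_add_one_lt_of_tendsto_zero (fun y hy => ?_) hlim hx
  exact hanti hy (show a < y + 1 by linarith) (lt_add_one y)

lemma tendsto_log_add_sub_log_add (b c : ℝ) :
    Tendsto (fun x => log (x + b) - log (x + c)) atTop (𝓝 0) := by
  simpa using (tendsto_log_comp_add_sub_log b).sub (tendsto_log_comp_add_sub_log c)

lemma tendsto_one_div_mul_sq_add (k c : ℝ) :
    Tendsto (fun x => 1 / (k * (x + c) ^ 2)) atTop (𝓝 0) := by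
  have h : Tendsto (fun x => ((x + c) ^ 2)⁻¹) atTop (𝓝 0) :=
    ((tendsto_pow_atTop two_ne_zero).comp
      (tendsto_atTop_add_const_right _ c tendsto_id)).inv_tendsto_atTop
  simpa [mul_inv, mul_comm] using h.const_mul k⁻¹

lemma hasDerivAt_one_div_mul_sq_add (k c : ℝ) {x : ℝ} (hx : x + c ≠ 0) :
    HasDerivAt (fun y => 1 / (k * (y + c) ^ 2)) (-2 / (k * (x + c) ^ 3)) x := by
  have h := ((((hasDerivAt_id' x).add_const c).fun_pow 2).fun_inv (pow_ne_zero 2 hx)).const_mul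
    k⁻¹
  simp only [one_div, mul_inv]
  refine h.congr_deriv ?_
  field_simp
  ring

noncomputable def midpointError (s : ℝ) : ℝ := log (s + 1/2) - log (s - 1/2) - s⁻¹

lemma hasDerivAt_midpointError {s : ℝ} (hs : 1/2 < s) :
    HasDerivAt midpointError (-1 / (s ^ 2 * (4 * s ^ 2 - 1))) s := by
  have hplus := ((hasDerivAt_id' s).add_const (1/2)).log (by linarith)
  have hminus := ((hasDerivAt_id' s).sub_const (1/2)).log (by linarith)
  have hinv := hasDerivAt_inv (show s ≠ 0 by linarith)
  refine ((hplus.sub hminus).sub hinv).congr_deriv ?_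
  have : 2 * s - 1 ≠ 0 := by linarith
  have : 2 * s + 1 ≠ 0 := by linarith
  rw [show s - 1/2 = (2 * s - 1) / 2 by ring, show s + 1/2 = (2 * s + 1) / 2 by ring,
    show 4 * s ^ 2 - 1 = (2 * s - 1) * (2 * s + 1) by ring]
  field_simp
  ring

lemma tendsto_midpointError : Tendsto midpointError atTop (𝓝 0) := by
  have h := (tendsto_log_add_sub_log_add (1/2) (-(1/2))).sub tendsto_inv_atTop_zero
  rw [sub_zero] at h
  refine h.congr fun s => ?_
  simp only [midpointError, sub_eq_add_neg]

lemma lt_midpointError {s : ℝ} (hs : 1/2 < s) :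
    1 / (24 * s ^ 2) - 1 / (24 * (s + 1) ^ 2) < midpointError s := by
  suffices 0 < midpointError s - (1 / (24 * s ^ 2) - 1 / (24 * (s + 1) ^ 2)) by linarith
  refine pos_of_hasDerivAt_neg_of_tendsto_zero
    (F := fun t => midpointError t - (1 / (24 * t ^ 2) - 1 / (24 * (t + 1) ^ 2)))
    (F' := fun t =>
      -1 / (t ^ 2 * (4 * t ^ 2 - 1)) - (-2 / (24 * t ^ 3) - -2 / (24 * (t + 1) ^ 3)))
    (fun t ht => ?_) (fun t ht => ?_) ?_ hs
  · have h0 := hasDerivAt_one_div_mul_sq_add 24 0 (x := t) (by linarith)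
    have h1 := hasDerivAt_one_div_mul_sq_add 24 1 (x := t) (by linarith)
    simp only [add_zero] at h0
    exact (hasDerivAt_midpointError ht).sub (h0.sub h1)
  · have ht0 : 0 < t := by linarith
    have hq : 0 < 4 * t ^ 2 - 1 := by nlinarith
    have : t + 1 ≠ 0 := by linarith
    rw [show -1 / (t ^ 2 * (4 * t ^ 2 - 1)) - (-2 / (24 * t ^ 3) - -2 / (24 * (t + 1) ^ 3))
        = -(24 * t ^ 3 + 35 * t ^ 2 + 15 * t + 1) / (12 * t ^ 3 * (t + 1) ^ 3 * (4 * t ^ 2 - 1)) by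
      rw [div_sub_div _ _ (by positivity) (by positivity),
        div_sub_div _ _ (by positivity) (by positivity),
        div_eq_div_iff (by positivity) (by positivity)]
      ring]
    exact div_neg_of_neg_of_pos (by nlinarith [pow_pos ht0 3, pow_pos ht0 2])
      (mul_pos (by positivity) hq)
  · have h0 := tendsto_one_div_mul_sq_add 24 0
    simp only [add_zero] at h0
    simpa using tendsto_midpointError.sub (h0.sub (tendsto_one_div_mul_sq_add 24 1))

lemma midpointError_lt {s : ℝ} (hs : 1/2 < s) :
    midpointError s < 1 / (24 * (s - 1/2) ^ 2) - 1 / (24 * (s + 1/2) ^ 2) := by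
  suffices 0 < 1 / (24 * (s - 1/2) ^ 2) - 1 / (24 * (s + 1/2) ^ 2) - midpointError s by linarith
  refine pos_of_hasDerivAt_neg_of_tendsto_zero
    (F := fun t => 1 / (24 * (t - 1/2) ^ 2) - 1 / (24 * (t + 1/2) ^ 2) - midpointError t)
    (F' := fun t => -2 / (24 * (t - 1/2) ^ 3) - -2 / (24 * (t + 1/2) ^ 3)
      - -1 / (t ^ 2 * (4 * t ^ 2 - 1)))
    (fun t ht => ?_) (fun t ht => ?_) ?_ hs
  · have hm := hasDerivAt_one_div_mul_sq_add 24 (-(1/2)) (x := t) (by linarith)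
    have hp := hasDerivAt_one_div_mul_sq_add 24 (1/2) (x := t) (by linarith)
    simp only [← sub_eq_add_neg] at hm
    exact (hm.sub hp).sub (hasDerivAt_midpointError ht)
  · have ht0 : 0 < t := by linarith
    have hq : 0 < 4 * t ^ 2 - 1 := by nlinarith
    have : t - 1/2 ≠ 0 := by linarith
    have : t + 1/2 ≠ 0 := by linarith
    rw [show -2 / (24 * (t - 1/2) ^ 3) - -2 / (24 * (t + 1/2) ^ 3) - -1 / (t ^ 2 * (4 * t ^ 2 - 1))
        = -(28 * t ^ 2 - 3) / (3 * t ^ 2 * (4 * t ^ 2 - 1) ^ 3) by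
      rw [div_sub_div _ _ (by positivity) (by positivity),
        div_sub_div _ _ (by positivity) (by positivity),
        div_eq_div_iff (by positivity) (by positivity)]
      ring]
    exact div_neg_of_neg_of_pos (by nlinarith) (by positivity)
  · have hm := tendsto_one_div_mul_sq_add 24 (-(1/2))
    simp only [← sub_eq_add_neg] at hm
    simpa using (hm.sub (tendsto_one_div_mul_sq_add 24 (1/2))).sub tendsto_midpointError

lemma differentiableAt_log_Gamma {y : ℝ} (hy : 0 < y) :
    DifferentiableAt ℝ (fun y => log (Gamma y)) y :=
  (differentiableAt_Gamma fun m => by linarith [m.cast_nonneg (α := ℝ)]).log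
    (Gamma_pos_of_pos hy).ne'

lemma log_Gamma_add_one {y : ℝ} (hy : 0 < y) : log (Gamma (y + 1)) = log (Gamma y) + log y := by
  rw [Gamma_add_one hy.ne', log_mul hy.ne' (Gamma_pos_of_pos hy).ne', add_comm]

lemma digamma_add_one {y : ℝ} (hy : 0 < y) : digamma (y + 1) = digamma y + y⁻¹ := by
  unfold digamma
  rw [← deriv_comp_add_const, ← deriv_log,
    ← deriv_add (differentiableAt_log_Gamma hy) (differentiableAt_log hy.ne')]
  refine Filter.EventuallyEq.deriv_eq ?_
  filter_upwards [eventually_gt_nhds hy] with z hz using log_Gamma_add_one hz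

lemma digamma_le_log {y : ℝ} (hy : 0 < y) : digamma y ≤ log y := by
  have h := convexOn_log_Gamma.deriv_le_slope hy (show (0 : ℝ) < y + 1 by linarith)
    (lt_add_one y) (differentiableAt_log_Gamma hy)
  rwa [slope_def_field, Function.comp_apply, Function.comp_apply, log_Gamma_add_one hy,
    add_sub_cancel_left, add_sub_cancel_left, div_one] at h

lemma log_le_digamma_add_one {y : ℝ} (hy : 0 < y) : log y ≤ digamma (y + 1) := by
  have h := convexOn_log_Gamma.slope_le_deriv hy (show (0 : ℝ) < y + 1 by linarith)
    (lt_add_one y) (differentiableAt_log_Gamma (show (0 : ℝ) < y + 1 by linarith))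
  rwa [slope_def_field, Function.comp_apply, Function.comp_apply, log_Gamma_add_one hy,
    add_sub_cancel_left, add_sub_cancel_left, div_one] at h

lemma tendsto_digamma_add_one_sub_log_add_half :
    Tendsto (fun x => digamma (x + 1) - log (x + 1/2)) atTop (𝓝 0) := by
  have hlow : Tendsto (fun x => log x - log (x + 1/2)) atTop (𝓝 0) := by
    simpa using (tendsto_log_comp_add_sub_log (1/2)).neg
  refine tendsto_of_tendsto_of_tendsto_of_le_of_le' hlow (tendsto_log_add_sub_log_add 1 (1/2)) ?_ ?_
  all_goals filter_upwards [eventually_gt_atTop 0] with x hx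
  · linarith [log_le_digamma_add_one hx]
  · linarith [digamma_le_log (show 0 < x + 1 by linarith)]

theorem stmt_0 (x : ℝ) (hx : -(1/2 : ℝ) < x) :
    1 / (24 * (x + 1)^2) <
      Hreal x - Real.eulerMascheroniConstant - Real.log (x + 1/2) ∧
    Hreal x - Real.eulerMascheroniConstant - Real.log (x + 1/2) <
      1 / (24 * (x + 1/2)^2) := by
  rw [Hreal, add_sub_cancel_right]
  set f := fun y => digamma (y + 1) - log (y + 1/2)
  have hstep : ∀ y, -(1/2) < y → f (y + 1) = f y - midpointError (y + 1) := by
    intro y hy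
    simp only [f, midpointError, digamma_add_one (show 0 < y + 1 by linarith)]
    rw [show y + 1 - 1/2 = y + 1/2 by ring]
    ring
  have hlim : Tendsto f atTop (𝓝 0) := tendsto_digamma_add_one_sub_log_add_half
  constructor
  · refine sub_pos.1 (pos_of_forall_add_one_lt_of_tendsto_zero
      (D := fun y => f y - 1 / (24 * (y + 1) ^ 2)) (fun y hy => ?_) ?_ hx)
    · have := lt_midpointError (show 1/2 < y + 1 by linarith)
      simp only [hstep y hy]
      linarith
    · simpa using hlim.sub (tendsto_one_div_mul_sq_add 24 1)
  · refine sub_pos.1 (pos_of_forall_add_one_lt_of_tendsto_zero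
      (D := fun y => 1 / (24 * (y + 1/2) ^ 2) - f y) (fun y hy => ?_) ?_ hx)
    · have := midpointError_lt (show 1/2 < y + 1 by linarith)
      rw [show y + 1 - 1/2 = y + 1/2 by ring] at this
      simp only [hstep y hy]
      linarith
    · simpa using (tendsto_one_div_mul_sq_add 24 (1/2)).sub hlim
end

section
/- For every positive integer n, one has 1/(24(n+1)^2) < H_n - γ - log(n + 1/2) < 1/(24(n+1/2)^2), where H_n = Σ_{k=1}^n 1/k is the n-th harmonic number and γ is the Euler–Mascheroni constant. -/
/-!
Let `d n = H_n - γ - log (n + 1/2)`, so that `d n → 0` and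
`d n - d (n + 1) = log (1 + t) - log (1 - t) - 2 t` with `t = 1 / (2 (n + 1))`.
The series `log (1 + t) - log (1 - t) = ∑ 2 t ^ (2k+1) / (2k+1)` is bounded below by its first two
terms and above, termwise, by `2 t + (2/3) ∑ k t ^ (2k+1) = 2 t + 2 t³ / (3 (1 - t²)²)`; these
bounds say exactly that `d n - 1 / (24 (n+1)²)` is strictly decreasing and
`d n - 1 / (24 (n+1/2)²)` strictly increasing. Both tend to `0`, which gives the two inequalities.
-/

open Real Filter Topology

theorem StrictAnti.lt_of_tendsto {α β : Type*} [TopologicalSpace α] [Preorder α]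
    [OrderClosedTopology α] [PartialOrder β] [IsDirectedOrder β] [NoMaxOrder β]
    {f : β → α} {a : α} (hf : StrictAnti f) (hlim : Tendsto f atTop (𝓝 a)) (b : β) :
    a < f b := by
  obtain ⟨c, hbc⟩ := exists_gt b
  exact (hf.antitone.le_of_tendsto hlim c).trans_lt (hf hbc)

theorem StrictMono.gt_of_tendsto {α β : Type*} [TopologicalSpace α] [Preorder α]
    [OrderClosedTopology α] [PartialOrder β] [IsDirectedOrder β] [NoMaxOrder β]
    {f : β → α} {a : α} (hf : StrictMono f) (hlim : Tendsto f atTop (𝓝 a)) (b : β) :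
    f b < a :=
  StrictAnti.lt_of_tendsto (α := αᵒᵈ) hf.dual_right hlim b

namespace Real

section LogSeries

variable {t : ℝ}

theorem two_mul_add_lt_log_one_add_sub_log_one_sub (h0 : 0 < t) (h1 : t < 1) :
    2 * t + 2 * t ^ 3 / 3 < log (1 + t) - log (1 - t) := by
  have hs := hasSum_log_sub_log_of_abs_lt_one (abs_lt.2 ⟨by linarith, h1⟩)
  have h3 := sum_le_hasSum (Finset.range 3) (fun _ _ ↦ by positivity) hs
  norm_num [Finset.sum_range_succ] at h3
  linarith [pow_pos h0 5]

theorem log_one_add_sub_log_one_sub_lt (h0 : 0 < t) (h1 : t < 1) :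
    log (1 + t) - log (1 - t) < 2 * t + 2 * t ^ 3 / (3 * (1 - t ^ 2) ^ 2) := by
  have hs := hasSum_log_sub_log_of_abs_lt_one (abs_lt.2 ⟨by linarith, h1⟩)
  have ht2 : ‖t ^ 2‖ < 1 := by
    rw [norm_eq_abs, abs_of_pos (by positivity)]; nlinarith
  have hmajor := (hasSum_ite_eq 0 (2 * t)).add
    ((hasSum_coe_mul_geometric_of_norm_lt_one ht2).mul_left (2 * t / 3))
  have hterm (k : ℕ) : 2 * (1 / (2 * k + 1)) * t ^ (2 * k + 1) ≤
      (if k = 0 then 2 * t else 0) + 2 * t / 3 * (k * (t ^ 2) ^ k) := by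
    rcases Nat.eq_zero_or_pos k with rfl | hk
    · simp
    · have hk1 : (1 : ℝ) ≤ k := by exact_mod_cast hk
      rw [if_neg hk.ne', zero_add, pow_succ, pow_mul]
      have : 2 * (1 / (2 * (k : ℝ) + 1)) ≤ 2 / 3 * k := by
        rw [mul_one_div, div_le_iff₀ (by positivity)]; nlinarith
      calc 2 * (1 / (2 * (k : ℝ) + 1)) * ((t ^ 2) ^ k * t)
          ≤ 2 / 3 * k * ((t ^ 2) ^ k * t) := by gcongr
        _ = 2 * t / 3 * (k * (t ^ 2) ^ k) := by ring
  have hterm2 : 2 * (1 / (2 * (2 : ℕ) + 1)) * t ^ (2 * 2 + 1) <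
      (if (2 : ℕ) = 0 then 2 * t else 0) + 2 * t / 3 * ((2 : ℕ) * (t ^ 2) ^ 2) := by
    norm_num; nlinarith [pow_pos h0 5]
  exact (hasSum_lt hterm hterm2 hs hmajor).trans_eq (by
    have : 1 - t ^ 2 ≠ 0 := by nlinarith
    field_simp)

end LogSeries

section Midpoint

variable {u : ℝ}

theorem log_add_half_sub_log_sub_half (hu : 1 / 2 < u) :
    log (u + 1 / 2) - log (u - 1 / 2) = log (1 + 1 / (2 * u)) - log (1 - 1 / (2 * u)) := by
  have hu0 : u ≠ 0 := by linarith
  rw [show 1 + 1 / (2 * u) = (u + 1 / 2) / u by field_simp,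
    show 1 - 1 / (2 * u) = (u - 1 / 2) / u by field_simp,
    log_div (by positivity) hu0, log_div (by linarith) hu0]
  ring

theorem inv_add_sub_lt_log_add_half_sub_log_sub_half (hu : 1 / 2 < u) :
    1 / u + (1 / (24 * u ^ 2) - 1 / (24 * (u + 1) ^ 2)) <
      log (u + 1 / 2) - log (u - 1 / 2) := by
  have hu0 : 0 < u := by linarith
  refine lt_trans ?_ ((log_add_half_sub_log_sub_half hu).symm ▸
    two_mul_add_lt_log_one_add_sub_log_one_sub (t := 1 / (2 * u)) (by positivity)
      ((div_lt_one (by positivity)).2 (by linarith)))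
  have key : 2 * (1 / (2 * u)) + 2 * (1 / (2 * u)) ^ 3 / 3 -
      (1 / u + (1 / (24 * u ^ 2) - 1 / (24 * (u + 1) ^ 2))) =
        (3 * u + 2) / (24 * u ^ 3 * (u + 1) ^ 2) := by
    field_simp
    ring
  linarith [show 0 < (3 * u + 2) / (24 * u ^ 3 * (u + 1) ^ 2) by positivity]

theorem log_add_half_sub_log_sub_half_lt (hu : 1 / 2 < u) :
    log (u + 1 / 2) - log (u - 1 / 2) <
      1 / u + (1 / (24 * (u - 1 / 2) ^ 2) - 1 / (24 * (u + 1 / 2) ^ 2)) := by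
  have hu0 : 0 < u := by linarith
  have hum : 2 * u - 1 ≠ 0 := by linarith
  rw [log_add_half_sub_log_sub_half hu]
  refine (log_one_add_sub_log_one_sub_lt (t := 1 / (2 * u)) (by positivity)
    ((div_lt_one (by positivity)).2 (by linarith))).trans_eq ?_
  rw [show 1 - (1 / (2 * u)) ^ 2 = (u - 1 / 2) * (u + 1 / 2) / u ^ 2 by field_simp; ring]
  field_simp
  ring

end Midpoint
end Real

noncomputable def harmonicGap (n : ℕ) : ℝ :=
  harmonic n - eulerMascheroniConstant - log (n + 1 / 2)

theorem harmonicGap_sub_harmonicGap_succ (n : ℕ) :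
    harmonicGap n - harmonicGap (n + 1) =
      log ((n + 1 : ℝ) + 1 / 2) - log (n + 1 / 2) - 1 / (n + 1) := by
  simp only [harmonicGap, harmonic_succ]
  push_cast
  ring

theorem tendsto_harmonicGap_sub (c : ℝ) :
    Tendsto (fun n : ℕ ↦ harmonicGap n - 1 / (24 * ((n : ℝ) + c) ^ 2)) atTop (𝓝 0) := by
  have hlog := (tendsto_log_comp_add_sub_log (1 / 2)).comp tendsto_natCast_atTop_atTop
  have hsq : Tendsto (fun x : ℝ ↦ 1 / (24 * (x + c) ^ 2)) atTop (𝓝 0) :=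
    tendsto_const_nhds.div_atTop (((tendsto_pow_atTop two_ne_zero).comp
      (tendsto_atTop_add_const_right _ c tendsto_id)).const_mul_atTop (by norm_num))
  have := ((tendsto_harmonic_sub_log.sub_const eulerMascheroniConstant).sub hlog).sub
    (hsq.comp tendsto_natCast_atTop_atTop)
  simp only [sub_self] at this
  refine this.congr fun n ↦ ?_
  simp only [harmonicGap, Function.comp_apply]
  ring

theorem strictAnti_harmonicGap_sub :
    StrictAnti fun n : ℕ ↦ harmonicGap n - 1 / (24 * ((n : ℝ) + 1) ^ 2) := by
  refine strictAnti_nat_of_succ_lt fun n ↦ ?_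
  have hstep := inv_add_sub_lt_log_add_half_sub_log_sub_half (u := n + 1)
    (by linarith [n.cast_nonneg (α := ℝ)])
  have hgap := harmonicGap_sub_harmonicGap_succ n
  rw [show (n : ℝ) + 1 - 1 / 2 = n + 1 / 2 by ring] at hstep
  push_cast
  linarith

theorem strictMono_harmonicGap_sub :
    StrictMono fun n : ℕ ↦ harmonicGap n - 1 / (24 * ((n : ℝ) + 1 / 2) ^ 2) := by
  refine strictMono_nat_of_lt_succ fun n ↦ ?_
  have hstep := log_add_half_sub_log_sub_half_lt (u := n + 1)
    (by linarith [n.cast_nonneg (α := ℝ)])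
  have hgap := harmonicGap_sub_harmonicGap_succ n
  rw [show (n : ℝ) + 1 - 1 / 2 = n + 1 / 2 by ring] at hstep
  push_cast
  linarith

theorem stmt_1_general (n : ℕ) :
    1 / (24 * ((n : ℝ) + 1)^2) <
      (harmonic n : ℝ) - Real.eulerMascheroniConstant - Real.log ((n : ℝ) + 1/2) ∧
    (harmonic n : ℝ) - Real.eulerMascheroniConstant - Real.log ((n : ℝ) + 1/2) <
      1 / (24 * ((n : ℝ) + 1/2)^2) := by
  have hlower := strictAnti_harmonicGap_sub.lt_of_tendsto (tendsto_harmonicGap_sub 1) n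
  have hupper := strictMono_harmonicGap_sub.gt_of_tendsto (tendsto_harmonicGap_sub (1 / 2)) n
  simp only [harmonicGap, sub_pos, sub_neg] at hlower hupper
  exact ⟨hlower, hupper⟩

theorem stmt_1 (n : ℕ) (hn : 0 < n) :
    1 / (24 * ((n : ℝ) + 1)^2) <
      (harmonic n : ℝ) - Real.eulerMascheroniConstant - Real.log ((n : ℝ) + 1/2) ∧
    (harmonic n : ℝ) - Real.eulerMascheroniConstant - Real.log ((n : ℝ) + 1/2) <
      1 / (24 * ((n : ℝ) + 1/2)^2) :=
  stmt_1_general n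
end

section
/- Let t, r be real numbers with r > 0 and t > -log r. Then ∫_r^∞ dx/(x^2 (t + log x)^2) = e^t · li(1/(r e^t)) + 1/(r(t + log r)), and this quantity is positive. -/
/-!
Put `F(x) = eᵗ li(1 / (x eᵗ)) + 1 / (x (t + log x))`. Since `log (1 / (x eᵗ)) = -(t + log x)`,
the chain rule and `li' = 1 / log` give `F'(x) = -1 / (x² (t + log x)²)` wherever `t + log x > 0`,
and `F(x) → 0` as `x → ∞` because `li` is continuous at `0` with `li 0 = 0`. The fundamental
theorem of calculus on `[r, ∞)` then yields `∫_r^∞ = F(r)`.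
-/

open Real Filter MeasureTheory Topology

/-- The logarithmic integral `li(x) = ∫_0^x dt / log t` (Cauchy principal value for `x > 1`). -/
noncomputable def li (x : ℝ) : ℝ :=
  if x ≤ 1 then ∫ t in (0:ℝ)..x, 1 / Real.log t
  else limUnder (nhdsWithin (0:ℝ) (Set.Ioi 0))
    (fun ε => (∫ t in (0:ℝ)..(1 - ε), 1 / Real.log t) + ∫ t in (1 + ε)..x, 1 / Real.log t)

lemma li_of_le {x : ℝ} (hx : x ≤ 1) : li x = ∫ t in (0:ℝ)..x, 1 / log t := if_pos hx

lemma li_zero : li 0 = 0 := by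
  simp [li_of_le zero_le_one]

/-- Thanks to the junk value `log 0 = 0`, this holds at `0` itself and not only from the right. -/
lemma continuousAt_one_div_log_zero : ContinuousAt (fun x : ℝ => 1 / log x) 0 := by
  rw [← continuousWithinAt_compl_self, ContinuousWithinAt]
  simp only [log_zero, div_zero, one_div]
  exact tendsto_log_nhdsNE_zero.inv_tendsto_atBot

lemma continuousOn_one_div_log_Ioo : ContinuousOn (fun x : ℝ => 1 / log x) (Set.Ioo (-1) 1) := by
  intro x ⟨hx₁, hx₂⟩
  rcases eq_or_ne x 0 with rfl | hx₀
  · exact continuousAt_one_div_log_zero.continuousWithinAt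
  · have hlog : log x ≠ 0 := log_ne_zero.mpr ⟨hx₀, hx₂.ne, hx₁.ne'⟩
    exact (continuousAt_const.div (continuousAt_log hx₀) hlog).continuousWithinAt

lemma hasDerivAt_li {y : ℝ} (hy : y ∈ Set.Ioo (-1) 1) : HasDerivAt li (1 / log y) y := by
  have hzero : (0 : ℝ) ∈ Set.Ioo (-1) 1 := ⟨by norm_num, by norm_num⟩
  have hint : IntervalIntegrable (fun u => 1 / log u) volume 0 y :=
    (continuousOn_one_div_log_Ioo.mono
      (Set.ordConnected_Ioo.uIcc_subset hzero hy)).intervalIntegrable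
  have hmeas : StronglyMeasurableAtFilter (fun u => 1 / log u) (𝓝 y) :=
    (measurable_const.div measurable_log).stronglyMeasurable.stronglyMeasurableAtFilter
  have hcont := continuousOn_one_div_log_Ioo.continuousAt (isOpen_Ioo.mem_nhds hy)
  refine (intervalIntegral.integral_hasDerivAt_right hint hmeas hcont).congr_of_eventuallyEq ?_
  filter_upwards [Iic_mem_nhds hy.2] with u hu using li_of_le hu

lemma tendsto_li_zero : Tendsto li (𝓝 0) (𝓝 0) := by
  simpa only [li_zero] using
    (hasDerivAt_li (y := 0) ⟨by norm_num, by norm_num⟩).continuousAt.tendsto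

noncomputable def liTail (t x : ℝ) : ℝ :=
  exp t * li (1 / (x * exp t)) + 1 / (x * (t + log x))

lemma log_one_div_mul_exp {x : ℝ} (hx : 0 < x) (t : ℝ) :
    log (1 / (x * exp t)) = -(t + log x) := by
  rw [one_div, log_inv, log_mul hx.ne' (exp_pos t).ne', log_exp, add_comm]

lemma hasDerivAt_liTail {t x : ℝ} (hx : 0 < x) (hpos : 0 < t + log x) :
    HasDerivAt (liTail t) (-(1 / (x ^ 2 * (t + log x) ^ 2))) x := by
  have hxe : 0 < x * exp t := mul_pos hx (exp_pos t)
  have hmem : 1 / (x * exp t) ∈ Set.Ioo (-1) 1 := by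
    refine ⟨by linarith [one_div_pos.mpr hxe], (div_lt_one hxe).mpr ?_⟩
    rw [← exp_log hx, ← exp_add]
    exact one_lt_exp_iff.mpr (by linarith)
  have hinv : HasDerivAt (fun x => 1 / (x * exp t)) (-exp t / (x * exp t) ^ 2) x := by
    simpa only [one_div] using (hasDerivAt_mul_const (exp t)).fun_inv hxe.ne'
  have hli := ((hasDerivAt_li hmem).comp x hinv).const_mul (exp t)
  have hmul : HasDerivAt (fun x => x * (t + log x)) (t + log x + 1) x := by
    refine ((hasDerivAt_id' x).mul ((hasDerivAt_log hx.ne').const_add t)).congr_deriv ?_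
    rw [mul_inv_cancel₀ hx.ne']
    ring
  have hrat : HasDerivAt (fun x => 1 / (x * (t + log x)))
      (-(t + log x + 1) / (x * (t + log x)) ^ 2) x := by
    simpa only [one_div] using hmul.fun_inv (mul_pos hx hpos).ne'
  refine HasDerivAt.congr_deriv (f := liTail t) (hli.add hrat) ?_
  rw [log_one_div_mul_exp hx]
  field_simp
  ring

lemma tendsto_liTail_atTop (t : ℝ) : Tendsto (liTail t) atTop (𝓝 0) := by
  have hli : Tendsto (fun x => li (1 / (x * exp t))) atTop (𝓝 0) := by
    refine tendsto_li_zero.comp ?_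
    simp only [one_div]
    exact (tendsto_id.atTop_mul_const (exp_pos t)).inv_tendsto_atTop
  have hrat : Tendsto (fun x => 1 / (x * (t + log x))) atTop (𝓝 0) := by
    simp only [one_div]
    exact (tendsto_id.atTop_mul_atTop₀
      (tendsto_atTop_add_const_left _ t tendsto_log_atTop)).inv_tendsto_atTop
  have hsum := (hli.const_mul (exp t)).add hrat
  rw [mul_zero, add_zero] at hsum
  exact hsum

theorem stmt_6 (t r : ℝ) (hr : 0 < r) (ht : -Real.log r < t) :
    (∫ x in Set.Ioi r, 1 / (x^2 * (t + Real.log x)^2)) =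
      Real.exp t * li (1 / (r * Real.exp t)) + 1 / (r * (t + Real.log r)) ∧
    0 < ∫ x in Set.Ioi r, 1 / (x^2 * (t + Real.log x)^2) := by
  have hpos : ∀ x ∈ Set.Ici r, 0 < x ∧ 0 < t + log x := fun x hx =>
    ⟨hr.trans_le hx, by linarith [log_le_log hr hx]⟩
  have hderiv : ∀ x ∈ Set.Ici r,
      HasDerivAt (fun x => -liTail t x) (1 / (x ^ 2 * (t + log x) ^ 2)) x := fun x hx =>
    (hasDerivAt_liTail (hpos x hx).1 (hpos x hx).2).neg.congr_deriv (neg_neg _)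
  have hnonneg : ∀ x ∈ Set.Ioi r, 0 ≤ 1 / (x ^ 2 * (t + log x) ^ 2) := fun _ _ => by positivity
  have hlim : Tendsto (fun x => -liTail t x) atTop (𝓝 0) := by
    simpa using (tendsto_liTail_atTop t).neg
  constructor
  · rw [integral_Ioi_of_hasDerivAt_of_nonneg' hderiv hnonneg hlim, zero_sub, neg_neg]
    rfl
  · rw [setIntegral_pos_iff_support_of_nonneg_ae
      (ae_restrict_of_forall_mem measurableSet_Ioi hnonneg)
      (integrableOn_Ioi_deriv_of_nonneg' hderiv hnonneg hlim), Set.inter_eq_right.mpr,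
      Real.volume_Ioi]
    · simp
    · intro x hx
      obtain ⟨hx₀, hlog⟩ := hpos x (Set.mem_Ici_of_Ioi hx)
      exact (one_div_pos.mpr (by positivity)).ne'
end

section
/- Let t, r be real with r > 0 and t > -log r. Then for every even positive integer n, Σ_{k=2}^{n+1} (-1)^k (k-1)!/(r(t+log r)^k) < ∫_r^∞ dx/(x^2(t+log x)^2) < Σ_{k=2}^{n} (-1)^k (k-1)!/(r(t+log r)^k). In particular, 1/(r(t+log r)^2) - 2/(r(t+log r)^3) < ∫_r^∞ dx/(x^2(t+log x)^2) < 1/(r(t+log r)^2). -/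
/-! Write `I m = ∫_r^∞ dx / (x² (t + log x)^m)` and `a = t + log r > 0`. Since
`-(x (t + log x)^m)⁻¹` is an antiderivative of `1 / (x² (t + log x)^m) + m / (x² (t + log x)^(m+1))`
vanishing at infinity, integration by parts gives `I m = 1 / (r a^m) - m I (m+1)`. Iterating from
`m = 2` yields `I 2 = ∑_{k=2}^{n} (-1)^k (k-1)! / (r a^k) + (-1)^(n+1) n! I (n+1)`, and as every `I m`
is positive, the remainder has the sign of `(-1)^(n+1)`: the partial sums envelop `I 2`. -/

open Real Filter MeasureTheory Finset Set

noncomputable section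

def logTailIntegral (t r : ℝ) (m : ℕ) : ℝ :=
  ∫ x in Ioi r, 1 / (x ^ 2 * (t + log x) ^ m)

def logTailSum (t r : ℝ) (n : ℕ) : ℝ :=
  ∑ k ∈ Icc 2 n, (-1 : ℝ) ^ k * (k - 1).factorial / (r * (t + log r) ^ k)

variable {t r : ℝ}

lemma add_log_pos_of_le (hr : 0 < r) (ht : 0 < t + log r) {x : ℝ} (hx : r ≤ x) :
    0 < t + log x := by
  linarith [log_le_log hr hx]

lemma add_log_pow_le (hr : 0 < r) (ht : 0 < t + log r) {x : ℝ} (hx : r ≤ x) (m : ℕ) :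
    (t + log r) ^ m ≤ (t + log x) ^ m :=
  pow_le_pow_left₀ ht.le (by linarith [log_le_log hr hx]) m

lemma continuousOn_one_div_sq_mul_add_log_pow (hr : 0 < r) (ht : 0 < t + log r) (m : ℕ) :
    ContinuousOn (fun x : ℝ => 1 / (x ^ 2 * (t + log x) ^ m)) (Ici r) := by
  intro x hx
  have hx0 : 0 < x := hr.trans_le hx
  have hlog := add_log_pos_of_le hr ht hx
  refine ContinuousAt.continuousWithinAt (continuousAt_const.div ?_ (by positivity))
  exact (continuousAt_pow _ 2).mul ((continuousAt_const.add (continuousAt_log hx0.ne')).pow m)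

lemma integrableOn_one_div_sq_mul_add_log_pow (hr : 0 < r) (ht : 0 < t + log r) (m : ℕ) :
    IntegrableOn (fun x : ℝ => 1 / (x ^ 2 * (t + log x) ^ m)) (Ioi r) := by
  have hdom : IntegrableOn (fun x : ℝ => ((t + log r) ^ m)⁻¹ * x ^ (-2 : ℝ)) (Ioi r) :=
    (integrableOn_Ioi_rpow_of_lt (by norm_num) hr).const_mul _
  refine hdom.integrable.mono
    (((continuousOn_one_div_sq_mul_add_log_pow hr ht m).mono Ioi_subset_Ici_self).aestronglyMeasurable
      measurableSet_Ioi) ?_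
  filter_upwards [ae_restrict_mem measurableSet_Ioi] with x hx
  have hx0 : 0 < x := hr.trans hx
  have hlog := add_log_pos_of_le hr ht hx.le
  rw [norm_of_nonneg (by positivity), norm_of_nonneg (by positivity), rpow_neg hx0.le,
    rpow_two, one_div, mul_inv, mul_comm]
  exact mul_le_mul_of_nonneg_right
    (inv_anti₀ (by positivity) (add_log_pow_le hr ht hx.le m)) (by positivity)

lemma logTailIntegral_pos (hr : 0 < r) (ht : 0 < t + log r) (m : ℕ) :
    0 < logTailIntegral t r m := by
  have hpos : ∀ x ∈ Ioi r, 0 < 1 / (x ^ 2 * (t + log x) ^ m) := fun x hx => by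
    have hx0 : 0 < x := hr.trans hx
    have hlog := add_log_pos_of_le hr ht (le_of_lt hx)
    positivity
  rw [logTailIntegral, setIntegral_pos_iff_support_of_nonneg_ae
    ((ae_restrict_mem measurableSet_Ioi).mono fun x hx => (hpos x hx).le)
    (integrableOn_one_div_sq_mul_add_log_pow hr ht m)]
  refine lt_of_lt_of_le ?_ (measure_mono fun x hx => ⟨(hpos x hx).ne', hx⟩)
  simp

lemma hasDerivAt_neg_inv_mul_add_log_pow {x : ℝ} (hx : 0 < x) (hlog : 0 < t + log x) (m : ℕ) :
    HasDerivAt (fun x => -(x * (t + log x) ^ m)⁻¹)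
      (1 / (x ^ 2 * (t + log x) ^ m) + m * (1 / (x ^ 2 * (t + log x) ^ (m + 1)))) x := by
  have hpow := ((hasDerivAt_log hx.ne').const_add t).fun_pow m
  refine (((hasDerivAt_id' x).fun_mul hpow).fun_inv (by positivity)).fun_neg.congr_deriv ?_
  rcases m with _ | k
  · simp only [pow_zero, mul_one, CharP.cast_eq_zero, zero_mul, mul_zero, add_zero]
    field_simp
  · simp only [Nat.add_sub_cancel]
    field_simp
    push_cast
    ring

lemma tendsto_neg_inv_mul_add_log_pow (hr : 0 < r) (ht : 0 < t + log r) (m : ℕ) :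
    Tendsto (fun x => -(x * (t + log x) ^ m)⁻¹) atTop (nhds 0) := by
  rw [← neg_zero]
  refine (Tendsto.inv_tendsto_atTop ?_).neg
  refine tendsto_atTop_mono' atTop ?_ (tendsto_id.atTop_mul_const (pow_pos ht m))
  filter_upwards [Ici_mem_atTop r] with x hx
  exact mul_le_mul_of_nonneg_left (add_log_pow_le hr ht hx m) (hr.trans_le hx).le

lemma logTailIntegral_eq_sub (hr : 0 < r) (ht : 0 < t + log r) (m : ℕ) :
    logTailIntegral t r m = 1 / (r * (t + log r) ^ m) - m * logTailIntegral t r (m + 1) := by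
  have hint := integrableOn_one_div_sq_mul_add_log_pow hr ht
  have hftc := integral_Ioi_of_hasDerivAt_of_tendsto'
    (fun x hx => hasDerivAt_neg_inv_mul_add_log_pow (hr.trans_le hx)
      (add_log_pos_of_le hr ht hx) m)
    ((hint m).add ((hint (m + 1)).const_mul _)) (tendsto_neg_inv_mul_add_log_pow hr ht m)
  rw [integral_add (hint m) ((hint (m + 1)).const_mul _), integral_const_mul] at hftc
  rw [logTailIntegral, logTailIntegral, one_div (r * _)]
  linarith

lemma logTailIntegral_two_eq (hr : 0 < r) (ht : 0 < t + log r) {n : ℕ} (hn : 0 < n) :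
    logTailIntegral t r 2 =
      logTailSum t r n + (-1) ^ (n + 1) * n.factorial * logTailIntegral t r (n + 1) := by
  induction n, hn using Nat.le_induction with
  | base => simp [logTailSum]
  | succ n hn ih =>
    rw [ih, logTailIntegral_eq_sub hr ht (n + 1), logTailSum, logTailSum,
      sum_Icc_succ_top (by omega : 2 ≤ n + 1), Nat.add_sub_cancel, Nat.factorial_succ]
    push_cast
    ring

lemma logTailSum_lt_logTailIntegral_two (hr : 0 < r) (ht : 0 < t + log r) {n : ℕ} (hn : Odd n) :
    logTailSum t r n < logTailIntegral t r 2 := by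
  rw [logTailIntegral_two_eq hr ht hn.pos, (hn.add_one).neg_one_pow, one_mul, lt_add_iff_pos_right]
  exact mul_pos (by positivity) (logTailIntegral_pos hr ht _)

lemma logTailIntegral_two_lt_logTailSum (hr : 0 < r) (ht : 0 < t + log r) {n : ℕ} (hn : 0 < n)
    (hev : Even n) : logTailIntegral t r 2 < logTailSum t r n := by
  rw [logTailIntegral_two_eq hr ht hn, (hev.add_one).neg_one_pow, neg_one_mul, neg_mul,
    ← sub_eq_add_neg, sub_lt_self_iff]
  exact mul_pos (by positivity) (logTailIntegral_pos hr ht _)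

end

theorem stmt_7 (t r : ℝ) (hr : 0 < r) (ht : -Real.log r < t)
    (n : ℕ) (hn : 0 < n) (hev : Even n) :
    (∑ k ∈ Finset.Icc 2 (n + 1),
        (-1 : ℝ)^k * (Nat.factorial (k - 1)) / (r * (t + Real.log r)^k)) <
      (∫ x in Set.Ioi r, 1 / (x^2 * (t + Real.log x)^2)) ∧
    (∫ x in Set.Ioi r, 1 / (x^2 * (t + Real.log x)^2)) <
      (∑ k ∈ Finset.Icc 2 n,
        (-1 : ℝ)^k * (Nat.factorial (k - 1)) / (r * (t + Real.log r)^k)) ∧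
    1 / (r * (t + Real.log r)^2) - 2 / (r * (t + Real.log r)^3) <
      (∫ x in Set.Ioi r, 1 / (x^2 * (t + Real.log x)^2)) ∧
    (∫ x in Set.Ioi r, 1 / (x^2 * (t + Real.log x)^2)) < 1 / (r * (t + Real.log r)^2) := by
  have ht' : 0 < t + log r := by linarith
  have hsum_two : logTailSum t r 2 = 1 / (r * (t + log r) ^ 2) := by
    simp [logTailSum]
  have hsum_three :
      logTailSum t r 3 = 1 / (r * (t + log r) ^ 2) - 2 / (r * (t + log r) ^ 3) := by
    rw [logTailSum, show Finset.Icc 2 3 = {2, 3} from rfl, sum_pair (by decide)]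
    norm_num [Nat.factorial]
    ring
  refine ⟨logTailSum_lt_logTailIntegral_two hr ht' hev.add_one,
    logTailIntegral_two_lt_logTailSum hr ht' hn hev, ?_, ?_⟩
  · exact hsum_three ▸ logTailSum_lt_logTailIntegral_two hr ht' (by decide)
  · exact hsum_two ▸ logTailIntegral_two_lt_logTailSum hr ht' two_pos even_two
end

section
/- Let f(x) = 1/(t + log x) with t > -log N for a positive integer N. Then for every integer k ≥ N, (1/24)f''(k+1) < ∫_k^{k+1} f(x) dx - f(k + 1/2) < (1/24)f''(k), where f''(x) = 1/(x^2(t+log x)^2) + 2/(x^2(t+log x)^3). -/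
open Real Set

/-! If `f'' < C` on `(a, b)` and `m` is the midpoint, let `p` be the second-order Taylor polynomial
of `f` at `m` with `f''(m)` replaced by `C`. Then `p - f` is strictly convex with a double zero at
`m`, so `f < p` off `m`; integrating, the linear term of `p` vanishes by symmetry and
`∫ f < (b - a) f(m) + C (b - a)³ / 24`. The lower bound is the same argument for `-f`.

For `f x = 1 / (t + log x)` one has `f'' x = 1 / (x²u²) + 2 / (x²u³)` with `u = t + log x`, which
is strictly decreasing where `u > 0`, i.e. on `x > exp (-t)`; this contains `[k, k + 1]` because
`k ≥ N > exp (-t)`. -/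

lemma StrictConvexOn.lt_of_hasDerivAt_eq_zero {S : Set ℝ} {u : ℝ → ℝ} {m x : ℝ}
    (hu : StrictConvexOn ℝ S u) (hm : m ∈ S) (hx : x ∈ S) (hxm : x ≠ m)
    (hd : HasDerivAt u 0 m) : u m < u x := by
  rcases hxm.lt_or_gt with hlt | hgt
  · have := hu.slope_lt_of_hasDerivAt hx hm hlt hd
    rw [slope_def_field, div_neg_iff] at this
    rcases this with ⟨_, h⟩ | ⟨h, _⟩ <;> linarith
  · have := hu.lt_slope_of_hasDerivAt hm hx hgt hd
    rw [slope_def_field, div_pos_iff] at this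
    rcases this with ⟨h, _⟩ | ⟨_, h⟩ <;> linarith

lemma strictConvexOn_Icc_of_hasDerivAt2_pos {u u' u'' : ℝ → ℝ} {a b : ℝ}
    (hu : ∀ x ∈ Icc a b, HasDerivAt u (u' x) x) (hu' : ∀ x ∈ Icc a b, HasDerivAt u' (u'' x) x)
    (hpos : ∀ x ∈ Ioo a b, 0 < u'' x) : StrictConvexOn ℝ (Icc a b) u := by
  refine StrictMonoOn.strictConvexOn_of_deriv (convex_Icc a b)
    (fun x hx => (hu x hx).continuousAt.continuousWithinAt) ?_
  rw [interior_Icc]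
  have hmono : StrictMonoOn u' (Ioo a b) :=
    strictMonoOn_of_hasDerivWithinAt_pos (convex_Ioo a b)
      (fun x hx => (hu' x (Ioo_subset_Icc_self hx)).continuousAt.continuousWithinAt)
      (fun x hx => (hu' x (Ioo_subset_Icc_self (interior_subset hx))).hasDerivWithinAt)
      (fun x hx => hpos x (interior_subset hx))
  exact hmono.congr fun x hx => ((hu x (Ioo_subset_Icc_self hx)).deriv).symm

lemma integral_quadratic_about_midpoint (a b c₀ c₁ c₂ : ℝ) :
    ∫ x in a..b, (c₀ + c₁ * (x - (a + b) / 2) + c₂ * (x - (a + b) / 2) ^ 2) =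
      (b - a) * c₀ + c₂ * (b - a) ^ 3 / 12 := by
  rw [intervalIntegral.integral_eq_sub_of_hasDerivAt
    (f := fun x => c₀ * x + c₁ * (x - (a + b) / 2) ^ 2 / 2 + c₂ * (x - (a + b) / 2) ^ 3 / 3)]
  · ring
  · intro x _
    have hd := (hasDerivAt_id x).sub_const ((a + b) / 2)
    exact ((((hasDerivAt_id x).const_mul c₀).add ((hd.pow 2).const_mul c₁ |>.div_const 2)).add
      ((hd.pow 3).const_mul c₂ |>.div_const 3)).congr_deriv (by simp; ring)
  · exact (by fun_prop : Continuous _).intervalIntegrable _ _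

theorem integral_sub_mul_midpoint_lt {f f' f'' : ℝ → ℝ} {a b C : ℝ} (hab : a < b)
    (hf : ∀ x ∈ Icc a b, HasDerivAt f (f' x) x) (hf' : ∀ x ∈ Icc a b, HasDerivAt f' (f'' x) x)
    (hC : ∀ x ∈ Ioo a b, f'' x < C) :
    (∫ x in a..b, f x) - (b - a) * f ((a + b) / 2) < C * (b - a) ^ 3 / 24 := by
  set m := (a + b) / 2 with hm
  have hmI : m ∈ Icc a b := ⟨by linarith, by linarith⟩
  set p : ℝ → ℝ := fun x => f m + f' m * (x - m) + C / 2 * (x - m) ^ 2 with hp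
  have hderiv : ∀ x ∈ Icc a b, HasDerivAt (fun x => p x - f x) (f' m + C * (x - m) - f' x) x := by
    intro x hx
    have hd := (hasDerivAt_id x).sub_const m
    exact ((((hd.const_mul (f' m)).const_add (f m)).add
      ((hd.pow 2).const_mul (C / 2))).sub (hf x hx)).congr_deriv (by simp; ring)
  have hconv : StrictConvexOn ℝ (Icc a b) (fun x => p x - f x) :=
    strictConvexOn_Icc_of_hasDerivAt2_pos hderiv
      (fun x hx => ((((hasDerivAt_id x).sub_const m).const_mul C).const_add (f' m)).sub
        (hf' x hx) |>.congr_deriv (by simp))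
      fun x hx => sub_pos.2 (hC x hx)
  have hgap : ∀ x ∈ Icc a b, x ≠ m → f x < p x := by
    intro x hx hxm
    simpa [hp] using hconv.lt_of_hasDerivAt_eq_zero hmI hx hxm
      ((hderiv m hmI).congr_deriv (by simp))
  have hlt : ∫ x in a..b, f x < ∫ x in a..b, p x := by
    refine intervalIntegral.integral_lt_integral_of_continuousOn_of_le_of_exists_lt hab
      (fun x hx => (hf x hx).continuousAt.continuousWithinAt) (by fun_prop) (fun x hx => ?_)
      ⟨a, left_mem_Icc.2 hab.le, hgap a (left_mem_Icc.2 hab.le) (by linarith)⟩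
    rcases eq_or_ne x m with rfl | hxm
    · simp [hp]
    · exact (hgap x (Ioc_subset_Icc_self hx) hxm).le
  rw [hp, integral_quadratic_about_midpoint] at hlt
  linarith

theorem integral_sub_mul_midpoint_mem_Ioo_of_strictAntiOn {f f' f'' : ℝ → ℝ} {a b : ℝ}
    (hab : a < b) (hf : ∀ x ∈ Icc a b, HasDerivAt f (f' x) x)
    (hf' : ∀ x ∈ Icc a b, HasDerivAt f' (f'' x) x) (hanti : StrictAntiOn f'' (Icc a b)) :
    (∫ x in a..b, f x) - (b - a) * f ((a + b) / 2) ∈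
      Ioo (f'' b * (b - a) ^ 3 / 24) (f'' a * (b - a) ^ 3 / 24) := by
  have hmem : ∀ x ∈ Ioo a b, x ∈ Icc a b := fun _ hx => Ioo_subset_Icc_self hx
  refine ⟨?_, integral_sub_mul_midpoint_lt hab hf hf'
    fun x hx => hanti (left_mem_Icc.2 hab.le) (hmem x hx) hx.1⟩
  have := integral_sub_mul_midpoint_lt (f := -f) (f' := -f') (f'' := -f'') (C := -f'' b) hab
    (fun x hx => (hf x hx).neg) (fun x hx => (hf' x hx).neg)
    fun x hx => neg_lt_neg (hanti (hmem x hx) (right_mem_Icc.2 hab.le) hx.2)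
  simp only [Pi.neg_apply, intervalIntegral.integral_neg] at this
  linarith

lemma hasDerivAt_one_div_add_log {t x : ℝ} (hx : x ≠ 0) (hu : t + log x ≠ 0) :
    HasDerivAt (fun y => 1 / (t + log y)) (-1 / (x * (t + log x) ^ 2)) x :=
  ((hasDerivAt_const x 1).div ((hasDerivAt_log hx).const_add t) hu).congr_deriv
    (by field_simp; ring)

lemma hasDerivAt_neg_one_div_mul_add_log_sq {t x : ℝ} (hx : x ≠ 0) (hu : t + log x ≠ 0) :
    HasDerivAt (fun y => -1 / (y * (t + log y) ^ 2))
      (1 / (x ^ 2 * (t + log x) ^ 2) + 2 / (x ^ 2 * (t + log x) ^ 3)) x :=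
  ((hasDerivAt_const x (-1)).div ((hasDerivAt_id' x).fun_mul
    (((hasDerivAt_log hx).const_add t).fun_pow 2)) (mul_ne_zero hx (pow_ne_zero 2 hu))).congr_deriv
    (by field_simp; ring)

lemma add_log_pos_of_exp_neg_lt {t x : ℝ} (hx : exp (-t) < x) : 0 < t + log x := by
  linarith [(lt_log_iff_exp_lt ((exp_pos _).trans hx)).2 hx]

lemma strictAntiOn_second_deriv_one_div_add_log (t : ℝ) :
    StrictAntiOn (fun x => 1 / (x ^ 2 * (t + log x) ^ 2) + 2 / (x ^ 2 * (t + log x) ^ 3))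
      (Ioi (exp (-t))) := by
  intro x hx y _ hxy
  have hx0 : 0 < x := (exp_pos _).trans hx
  have hux := add_log_pos_of_exp_neg_lt hx
  have hlog : log x < log y := log_lt_log hx0 hxy
  have h2 : x ^ 2 * (t + log x) ^ 2 < y ^ 2 * (t + log y) ^ 2 := by gcongr
  have h3 : x ^ 2 * (t + log x) ^ 3 < y ^ 2 * (t + log y) ^ 3 := by gcongr
  dsimp only
  gcongr

theorem stmt_12 (N : ℕ) (hN : 0 < N) (t : ℝ) (ht : -Real.log N < t)
    (k : ℕ) (hk : N ≤ k) :
    (1/24) * (1 / (((k : ℝ) + 1)^2 * (t + Real.log ((k : ℝ) + 1))^2) +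
        2 / (((k : ℝ) + 1)^2 * (t + Real.log ((k : ℝ) + 1))^3)) <
      (∫ x in (k : ℝ)..((k : ℝ) + 1), 1 / (t + Real.log x)) -
        1 / (t + Real.log ((k : ℝ) + 1/2)) ∧
    (∫ x in (k : ℝ)..((k : ℝ) + 1), 1 / (t + Real.log x)) -
        1 / (t + Real.log ((k : ℝ) + 1/2)) <
      (1/24) * (1 / ((k : ℝ)^2 * (t + Real.log (k : ℝ))^2) +
        2 / ((k : ℝ)^2 * (t + Real.log (k : ℝ))^3)) := by
  have hN' : exp (-t) < N := (lt_log_iff_exp_lt (by exact_mod_cast hN)).1 (by linarith)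
  have hdom : Icc (k : ℝ) (k + 1) ⊆ Ioi (exp (-t)) :=
    fun x hx => hN'.trans_le ((Nat.cast_le.2 hk).trans hx.1)
  have hne : ∀ x ∈ Icc (k : ℝ) (k + 1), x ≠ 0 := fun x hx => ((exp_pos _).trans (hdom hx)).ne'
  have hu : ∀ x ∈ Icc (k : ℝ) (k + 1), t + log x ≠ 0 :=
    fun x hx => (add_log_pos_of_exp_neg_lt (hdom hx)).ne'
  have h := integral_sub_mul_midpoint_mem_Ioo_of_strictAntiOn (lt_add_one (k : ℝ))
    (fun x hx => hasDerivAt_one_div_add_log (hne x hx) (hu x hx))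
    (fun x hx => hasDerivAt_neg_one_div_mul_add_log_sq (hne x hx) (hu x hx))
    ((strictAntiOn_second_deriv_one_div_add_log t).mono hdom)
  rw [add_sub_cancel_left, one_pow, one_mul, show ((k : ℝ) + (k + 1)) / 2 = k + 1 / 2 by ring] at h
  exact ⟨by linarith [h.1], by linarith [h.2]⟩
end
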